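/- arXiv:2205.05732 — 3 statements merged into one kernel-verified Lean document; each statement's English description precedes it below -/
import Mathlib

section
/- Let A and B be real symmetric matrices of the same size, and define λ₁*(M) = sqrt((λ₁(M)² + Tr(M²))/2) where λ₁(M) is the largest eigenvalue. Then |λ₁*(A) - λ₁*(B)| ≤ sqrt(Tr((A-B)²)). -/
/-!
For symmetric `M` we have `Tr(M²) = ‖M‖²` in the Frobenius norm, so `λ₁*(M)` is the quadratic mean
of `λ₁(M)` and `‖M‖`. Both are 1-Lipschitz in the Frobenius norm: `‖M‖` by the triangle
inequality, and `λ₁` by Weyl's argument, since `λ₁(M)` is the maximal Rayleigh quotient and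
`|⟪x, C x⟫| ≤ ‖C‖_op ≤ ‖C‖` for unit `x`. A quadratic mean of two numbers moves by at most the
larger displacement of its arguments, being a rescaled Euclidean norm on `ℝ²`.
-/

open Matrix

/-- The largest eigenvalue of a Hermitian real matrix. -/
noncomputable def lambdaMax {n : Type*} [Fintype n] [DecidableEq n]
    {A : Matrix n n ℝ} (hA : A.IsHermitian) : ℝ :=
  ⨆ i, hA.eigenvalues i

/-- `λ₁*(A) = sqrt((λ₁(A)² + Tr(A²))/2)`. -/
noncomputable def lambdaStar {n : Type*} [Fintype n] [DecidableEq n]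
    {A : Matrix n n ℝ} (hA : A.IsHermitian) : ℝ :=
  Real.sqrt ((lambdaMax hA ^ 2 + Matrix.trace (A * A)) / 2)

open scoped Matrix.Norms.Frobenius RealInnerProductSpace

theorem Real.abs_sqrt_sq_add_sq_div_two_sub_le {a₁ a₂ b₁ b₂ d : ℝ}
    (h₁ : |a₁ - b₁| ≤ d) (h₂ : |a₂ - b₂| ≤ d) :
    |√((a₁ ^ 2 + a₂ ^ 2) / 2) - √((b₁ ^ 2 + b₂ ^ 2) / 2)| ≤ d := by
  have hd : 0 ≤ d := (abs_nonneg _).trans h₁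
  have h2 : (0 : ℝ) < √2 := by positivity
  have hnorm : ∀ a b : ℝ, √((a ^ 2 + b ^ 2) / 2) = ‖!₂[a, b]‖ / √2 := fun a b => by
    simp [EuclideanSpace.norm_eq, Fin.sum_univ_two, Real.sqrt_div']
  calc |√((a₁ ^ 2 + a₂ ^ 2) / 2) - √((b₁ ^ 2 + b₂ ^ 2) / 2)|
      = |‖!₂[a₁, a₂]‖ - ‖!₂[b₁, b₂]‖| / √2 := by
        rw [hnorm, hnorm, ← sub_div, abs_div, abs_of_pos h2]
    _ ≤ ‖!₂[a₁, a₂] - !₂[b₁, b₂]‖ / √2 := by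
        gcongr; exact abs_norm_sub_norm_le _ _
    _ = √(((a₁ - b₁) ^ 2 + (a₂ - b₂) ^ 2) / 2) := by
        rw [hnorm]; congr 3; ext i; fin_cases i <;> simp
    _ ≤ √((d ^ 2 + d ^ 2) / 2) := by
        gcongr √((?_ + ?_) / 2) <;> exact sq_le_sq.mpr (by rwa [abs_of_nonneg hd])
    _ = d := by rw [add_self_div_two, Real.sqrt_sq hd]

namespace Matrix

theorem frobenius_norm_sq_eq_trace_transpose_mul_self {m n : Type*} [Fintype m] [Fintype n]
    (A : Matrix m n ℝ) : ‖A‖ ^ 2 = trace (Aᵀ * A) := by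
  rw [frobenius_norm_def, ← Real.rpow_natCast, ← Real.rpow_mul (by positivity)]
  norm_num [trace, mul_apply, Finset.sum_comm (γ := m), sq]

theorem norm_toEuclideanLin_le_frobenius {𝕜 m n : Type*} [RCLike 𝕜] [Fintype m] [Fintype n]
    [DecidableEq n] (A : Matrix m n 𝕜) (x : EuclideanSpace 𝕜 n) :
    ‖toEuclideanLin A x‖ ≤ ‖A‖ * ‖x‖ := by
  have := frobenius_norm_mul A (replicateCol Unit (WithLp.ofLp x))
  rwa [← replicateCol_mulVec, frobenius_norm_replicateCol, frobenius_norm_replicateCol] at this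

theorem abs_inner_toEuclideanLin_le_frobenius {n : Type*} [Fintype n] [DecidableEq n]
    (A : Matrix n n ℝ) (x : EuclideanSpace ℝ n) :
    |⟪x, toEuclideanLin A x⟫| ≤ ‖A‖ * ‖x‖ ^ 2 :=
  (abs_real_inner_le_norm _ _).trans <| by
    nlinarith [norm_toEuclideanLin_le_frobenius A x, norm_nonneg x]

namespace IsHermitian

variable {n : Type*} [Fintype n] [DecidableEq n] {A B : Matrix n n ℝ}

theorem trace_mul_self_eq_frobenius_norm_sq (hA : A.IsHermitian) : trace (A * A) = ‖A‖ ^ 2 := by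
  have hAt : Aᵀ = A := by rw [← conjTranspose_eq_transpose_of_trivial, hA.eq]
  rw [frobenius_norm_sq_eq_trace_transpose_mul_self, hAt]

theorem sqrt_trace_mul_self (hA : A.IsHermitian) : √(trace (A * A)) = ‖A‖ := by
  rw [hA.trace_mul_self_eq_frobenius_norm_sq, Real.sqrt_sq (norm_nonneg A)]

theorem toEuclideanLin_eigenvectorBasis (hA : A.IsHermitian) (j : n) :
    toEuclideanLin A (hA.eigenvectorBasis j) = hA.eigenvalues j • hA.eigenvectorBasis j := by
  ext1 i
  simpa using congrFun (hA.mulVec_eigenvectorBasis j) i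

theorem inner_toEuclideanLin_eq_sum (hA : A.IsHermitian) (x : EuclideanSpace ℝ n) :
    ⟪x, toEuclideanLin A x⟫ = ∑ j, hA.eigenvalues j * ⟪hA.eigenvectorBasis j, x⟫ ^ 2 := by
  rw [← hA.eigenvectorBasis.sum_inner_mul_inner]
  refine Finset.sum_congr rfl fun j _ => ?_
  rw [← isSymmetric_toEuclideanLin_iff.mpr hA, toEuclideanLin_eigenvectorBasis,
    real_inner_smul_left, real_inner_comm x]
  ring

theorem eigenvalues_le_lambdaMax (hA : A.IsHermitian) (i : n) : hA.eigenvalues i ≤ lambdaMax hA :=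
  le_ciSup (Set.finite_range _).bddAbove i

theorem inner_toEuclideanLin_le_lambdaMax (hA : A.IsHermitian) (x : EuclideanSpace ℝ n) :
    ⟪x, toEuclideanLin A x⟫ ≤ lambdaMax hA * ‖x‖ ^ 2 := by
  rw [hA.inner_toEuclideanLin_eq_sum, ← real_inner_self_eq_norm_sq,
    ← hA.eigenvectorBasis.sum_inner_mul_inner, Finset.mul_sum]
  refine Finset.sum_le_sum fun j _ => ?_
  rw [real_inner_comm x, ← sq]
  exact mul_le_mul_of_nonneg_right (hA.eigenvalues_le_lambdaMax j) (sq_nonneg _)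

theorem exists_inner_toEuclideanLin_eq_lambdaMax [Nonempty n] (hA : A.IsHermitian) :
    ∃ x : EuclideanSpace ℝ n, ‖x‖ = 1 ∧ ⟪x, toEuclideanLin A x⟫ = lambdaMax hA := by
  obtain ⟨i, hi⟩ := Finite.exists_max hA.eigenvalues
  have hnorm : ‖hA.eigenvectorBasis i‖ = 1 := hA.eigenvectorBasis.orthonormal.1 i
  refine ⟨hA.eigenvectorBasis i, hnorm, ?_⟩
  rw [toEuclideanLin_eigenvectorBasis, real_inner_smul_right, real_inner_self_eq_norm_sq, hnorm,
    one_pow, mul_one]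
  exact le_antisymm (hA.eigenvalues_le_lambdaMax i) (ciSup_le hi)

theorem lambdaMax_le_add_frobenius [Nonempty n] (hA : A.IsHermitian) (hB : B.IsHermitian) :
    lambdaMax hA ≤ lambdaMax hB + ‖A - B‖ := by
  obtain ⟨x, hx, hAx⟩ := hA.exists_inner_toEuclideanLin_eq_lambdaMax
  have hsplit :
      ⟪x, toEuclideanLin A x⟫ = ⟪x, toEuclideanLin B x⟫ + ⟪x, toEuclideanLin (A - B) x⟫ := by
    rw [map_sub, LinearMap.sub_apply, inner_sub_right, add_sub_cancel]
  have hB' := hB.inner_toEuclideanLin_le_lambdaMax x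
  have hAB := (abs_le.mp (abs_inner_toEuclideanLin_le_frobenius (A - B) x)).2
  rw [hx] at hB' hAB
  linarith

theorem abs_lambdaMax_sub_le_frobenius (hA : A.IsHermitian) (hB : B.IsHermitian) :
    |lambdaMax hA - lambdaMax hB| ≤ ‖A - B‖ := by
  cases isEmpty_or_nonempty n
  · simp [lambdaMax]
  · rw [abs_sub_le_iff]
    constructor
    · linarith [lambdaMax_le_add_frobenius hA hB]
    · linarith [lambdaMax_le_add_frobenius hB hA, norm_sub_rev A B]

theorem lambdaStar_eq (hA : A.IsHermitian) :
    lambdaStar hA = √((lambdaMax hA ^ 2 + ‖A‖ ^ 2) / 2) := by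
  rw [lambdaStar, hA.trace_mul_self_eq_frobenius_norm_sq]

end IsHermitian

end Matrix

theorem stmt_6 (m : ℕ) (A B : Matrix (Fin m) (Fin m) ℝ)
    (hA : A.IsHermitian) (hB : B.IsHermitian) :
    |lambdaStar hA - lambdaStar hB| ≤ Real.sqrt (Matrix.trace ((A - B) * (A - B))) := by
  rw [hA.lambdaStar_eq, hB.lambdaStar_eq, (hA.sub hB).sqrt_trace_mul_self]
  exact Real.abs_sqrt_sq_add_sq_div_two_sub_le (hA.abs_lambdaMax_sub_le_frobenius hB)
    (abs_norm_sub_norm_le A B)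
end

section
/- Define g(λ₁) = ∫_{λ₁ > λ₂ > ⋯ > λ_m} exp(-∑_{i=2}^m λ_i²/4) · ∏_{1 ≤ i < j ≤ m}(λ_i - λ_j) dλ₂⋯dλ_m. Then g(λ₁)/λ₁^{m-1} converges to Z_{m-1} as λ₁ → +∞, where Z_{m-1} = ∫_{λ₂ > ⋯ > λ_m} exp(-∑_{i=2}^m λ_i²/4) ∏_{2 ≤ i < j ≤ m}(λ_i - λ_j) dλ₂⋯dλ_m. -/
open MeasureTheory Filter Finset

/-- `g(t)`: integral over ordered tuples `t > λ₂ > ⋯ > λ_m` of the Gaussian weight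
times the full Vandermonde factor (with `λ₁ = t`). -/
noncomputable def gInt (m : ℕ) (t : ℝ) : ℝ :=
  ∫ v in {v : Fin (m - 1) → ℝ | (∀ i j : Fin (m - 1), i < j → v j < v i) ∧ ∀ i, v i < t},
    Real.exp (-(∑ i, v i ^ 2) / 4) *
      ((∏ i, (t - v i)) * ∏ i, ∏ j ∈ Finset.Ioi i, (v i - v j))

/-- The GOE partition function of size `m - 1` (ordered form). -/
noncomputable def Zconst (m : ℕ) : ℝ :=
  ∫ v in {v : Fin (m - 1) → ℝ | ∀ i j : Fin (m - 1), i < j → v j < v i},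
    Real.exp (-(∑ i, v i ^ 2) / 4) * ∏ i, ∏ j ∈ Finset.Ioi i, (v i - v j)

/-!
Dividing by `t ^ (m - 1)` turns `g(t) / t ^ (m - 1)` into the integral over the ordered chamber of
`w(v) ∏ᵢ (1 - vᵢ / t)` restricted to `{v | ∀ i, vᵢ < t}`, where `w` is the GOE weight of size
`m - 1`. This integrand tends pointwise to `w(v)`, and for `t ≥ 1` it is dominated by
`exp (-‖v‖² / 4) ∏ᵢ (1 + |vᵢ|) ∏_{i<j} |vᵢ - vⱼ|`, which is integrable because polynomial
growth is absorbed by `exp (c |x|)` and `exp (-x² / 4 + c |x|)` is integrable. Dominated convergence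
concludes.
-/

open Real

lemma integrable_exp_neg_sq_div_four_add_mul_abs (c : ℝ) :
    Integrable (fun x : ℝ => exp (-x ^ 2 / 4 + c * |x|)) := by
  refine ((integrable_exp_neg_mul_sq (by norm_num : (0 : ℝ) < 1 / 8)).const_mul
    (exp (2 * c ^ 2))).mono (by fun_prop) (ae_of_all _ fun x => ?_)
  rw [norm_of_nonneg (exp_nonneg _), norm_of_nonneg (by positivity), ← exp_add]
  exact exp_le_exp.2 (by nlinarith [sq_nonneg (|x| - 4 * c), sq_abs x])

noncomputable section

variable {n : ℕ}

def orderedChamber (n : ℕ) : Set (Fin n → ℝ) := {v | ∀ i j : Fin n, i < j → v j < v i}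

def goeWeight (v : Fin n → ℝ) : ℝ :=
  exp (-(∑ i, v i ^ 2) / 4) * ∏ i, ∏ j ∈ Ioi i, (v i - v j)

def goeMajorant (v : Fin n → ℝ) : ℝ :=
  exp (-(∑ i, v i ^ 2) / 4) * ((∏ i, (1 + |v i|)) * ∏ i, ∏ j ∈ Ioi i, |v i - v j|)

def scaledIntegrand (t : ℝ) : (Fin n → ℝ) → ℝ :=
  (Set.univ.pi fun _ => Set.Iio t).indicator fun v => goeWeight v * ∏ i, (1 - v i / t)

lemma measurableSet_orderedChamber (n : ℕ) : MeasurableSet (orderedChamber n) := by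
  simp only [orderedChamber, Set.ofPred_forall]
  exact .iInter fun i => .iInter fun j => .iInter fun _ =>
    measurableSet_lt (measurable_pi_apply j) (measurable_pi_apply i)

lemma continuous_goeWeight : Continuous (goeWeight (n := n)) := by
  unfold goeWeight; fun_prop

lemma goeMajorant_nonneg (v : Fin n → ℝ) : 0 ≤ goeMajorant v := by
  unfold goeMajorant; positivity

lemma prod_prod_abs_sub_le (v : Fin n → ℝ) :
    ∏ i, ∏ j ∈ Ioi i, |v i - v j| ≤ exp (2 * ∑ k, |v k|) ^ ∑ k : Fin n, #(Ioi k) := by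
  have hle : ∀ i, |v i| ≤ ∑ k, |v k| :=
    fun i => single_le_sum (fun j _ => abs_nonneg (v j)) (mem_univ i)
  calc ∏ i, ∏ j ∈ Ioi i, |v i - v j|
      ≤ ∏ i, ∏ _j ∈ Ioi i, exp (2 * ∑ k, |v k|) := by
        refine prod_le_prod (fun _ _ => by positivity) fun i _ =>
          prod_le_prod (fun _ _ => abs_nonneg _) fun j _ => ?_
        calc |v i - v j| ≤ |v i| + |v j| := abs_sub _ _
          _ ≤ 2 * ∑ k, |v k| := by linarith [hle i, hle j]
          _ ≤ exp (2 * ∑ k, |v k|) := by linarith [add_one_le_exp (2 * ∑ k, |v k|)]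
    _ = exp (2 * ∑ k, |v k|) ^ ∑ k : Fin n, #(Ioi k) := by
        simp only [prod_const, prod_pow_eq_pow_sum]

lemma goeMajorant_le_prod_exp (v : Fin n → ℝ) :
    goeMajorant v ≤ ∏ i, exp (-v i ^ 2 / 4 + (1 + 2 * ∑ k : Fin n, #(Ioi k)) * |v i|) := by
  have h_one_add : ∏ i, (1 + |v i|) ≤ exp (∑ k, |v k|) := by
    rw [exp_sum]
    exact prod_le_prod (fun _ _ => by positivity) fun i _ => by
      linarith [add_one_le_exp |v i|]
  calc goeMajorant v
      ≤ exp (-(∑ i, v i ^ 2) / 4) *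
          (exp (∑ k, |v k|) * exp (2 * ∑ k, |v k|) ^ ∑ k : Fin n, #(Ioi k)) := by
        unfold goeMajorant
        gcongr
        exact prod_prod_abs_sub_le v
    _ = ∏ i, exp (-v i ^ 2 / 4 + (1 + 2 * ∑ k : Fin n, #(Ioi k)) * |v i|) := by
        rw [← exp_sum, ← exp_nat_mul, ← exp_add, ← exp_add, sum_add_distrib, ← mul_sum,
          ← sum_div, sum_neg_distrib]
        push_cast
        ring_nf

lemma integrable_goeMajorant : Integrable (goeMajorant (n := n)) := by
  refine (Integrable.fintype_prod fun _ =>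
    integrable_exp_neg_sq_div_four_add_mul_abs (1 + 2 * ∑ k : Fin n, #(Ioi k))).mono
    (by unfold goeMajorant; fun_prop) (ae_of_all _ fun v => ?_)
  rw [norm_of_nonneg (goeMajorant_nonneg v), norm_of_nonneg (prod_nonneg fun _ _ => exp_nonneg _)]
  exact goeMajorant_le_prod_exp v

lemma norm_scaledIntegrand_le {t : ℝ} (ht : 1 ≤ t) (v : Fin n → ℝ) :
    ‖scaledIntegrand t v‖ ≤ goeMajorant v := by
  by_cases hv : v ∈ Set.univ.pi fun _ => Set.Iio t
  · rw [scaledIntegrand, Set.indicator_of_mem hv, norm_mul, goeWeight, norm_mul,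
      norm_of_nonneg (exp_nonneg _), norm_prod, goeMajorant, mul_assoc, mul_comm (∏ i, ‖_‖)]
    simp only [norm_prod, Real.norm_eq_abs]
    gcongr with i
    calc |1 - v i / t| ≤ |1| + |v i / t| := abs_sub _ _
      _ = 1 + |v i| / t := by rw [abs_one, abs_div, abs_of_pos (by linarith : (0 : ℝ) < t)]
      _ ≤ 1 + |v i| := by gcongr; exact div_le_self (abs_nonneg _) ht
  · rw [scaledIntegrand, Set.indicator_of_notMem hv, norm_zero]
    exact goeMajorant_nonneg v

lemma tendsto_scaledIntegrand (v : Fin n → ℝ) :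
    Tendsto (fun t => scaledIntegrand t v) atTop (nhds (goeWeight v)) := by
  have hlim : Tendsto (fun t : ℝ => goeWeight v * ∏ i, (1 - v i / t)) atTop
      (nhds (goeWeight v * ∏ _i : Fin n, (1 - 0))) :=
    tendsto_const_nhds.mul <| tendsto_finsetProd _ fun i _ =>
      tendsto_const_nhds.sub (tendsto_const_nhds.div_atTop tendsto_id)
  simp only [sub_zero, prod_const_one, mul_one] at hlim
  refine hlim.congr' ?_
  filter_upwards [eventually_all.2 fun i => eventually_gt_atTop (v i)] with t hv
  rw [scaledIntegrand, Set.indicator_of_mem (Set.mem_univ_pi.2 fun i => Set.mem_Iio.2 (hv i))]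

lemma tendsto_setIntegral_scaledIntegrand :
    Tendsto (fun t => ∫ v in orderedChamber n, scaledIntegrand t v) atTop
      (nhds (∫ v in orderedChamber n, goeWeight v)) := by
  refine tendsto_integral_filter_of_dominated_convergence goeMajorant
    (.of_forall fun t => ?_) ?_ integrable_goeMajorant.integrableOn
    (ae_of_all _ tendsto_scaledIntegrand)
  · exact (continuous_goeWeight.mul (by fun_prop)).aestronglyMeasurable.indicator
      (.univ_pi fun _ => measurableSet_Iio)
  · filter_upwards [eventually_ge_atTop 1] with t ht
    exact ae_of_all _ (norm_scaledIntegrand_le ht)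

end

lemma gInt_div_pow_eq_setIntegral_scaledIntegrand (m : ℕ) {t : ℝ} (ht : 0 < t) :
    gInt m t / t ^ (m - 1) = ∫ v in orderedChamber (m - 1), scaledIntegrand t v := by
  have hdomain : {v : Fin (m - 1) → ℝ | (∀ i j : Fin (m - 1), i < j → v j < v i) ∧ ∀ i, v i < t}
      = (Set.univ.pi fun _ => Set.Iio t) ∩ orderedChamber (m - 1) := by
    ext v; simp [orderedChamber, and_comm]
  rw [gInt, hdomain, ← Measure.restrict_restrict (.univ_pi fun _ => measurableSet_Iio),
    ← integral_indicator (.univ_pi fun _ => measurableSet_Iio), ← integral_div]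
  refine setIntegral_congr_fun (measurableSet_orderedChamber _) fun v _ => ?_
  by_cases hv : v ∈ Set.univ.pi fun _ => Set.Iio t
  · have hprod : ∏ i, (1 - v i / t) = (∏ i, (t - v i)) / t ^ (m - 1) := by
      have hfactor : ∀ i, 1 - v i / t = (t - v i) / t := fun i => by field_simp
      simp_rw [hfactor, prod_div_distrib, prod_const, card_univ, Fintype.card_fin]
    simp only [scaledIntegrand, Set.indicator_of_mem hv, hprod, goeWeight]
    ring
  · simp only [scaledIntegrand, Set.indicator_of_notMem hv, zero_div]

theorem stmt_13_general (m : ℕ) :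
    Tendsto (fun t : ℝ => gInt m t / t ^ (m - 1)) atTop (nhds (Zconst m)) := by
  refine tendsto_setIntegral_scaledIntegrand.congr' ?_
  filter_upwards [eventually_gt_atTop 0] with t ht
  exact (gInt_div_pow_eq_setIntegral_scaledIntegrand m ht).symm

theorem stmt_13 (m : ℕ) (hm : 2 ≤ m) :
    Tendsto (fun t : ℝ => gInt m t / t ^ (m - 1)) atTop (nhds (Zconst m)) :=
  stmt_13_general m
end

section
/- Let I be a finite index set, and for each α ∈ I let X_α be a Bernoulli random variable with p_α = P(X_α = 1), and let N_α ⊆ I with α ∈ N_α. Set S = ∑_α X_α and λ = ∑_α p_α ∈ (0,∞). Suppose for each α that X_α is independent of the σ-algebra generated by {X_β : β ∉ N_α}. Then |P(S = 0) − e^{−λ}| ≤ min(1, λ^{−1})(b₁ + b₂), where b₁ = ∑_{α∈I} ∑_{β∈N_α} p_α p_β and b₂ = ∑_{α∈I} ∑_{β∈N_α, β≠α} E[X_α X_β]. -/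
/-!
Stein's method. The function `f = steinSol λ`, `f (k+1) = ∫₀¹ sᵏ e^{-λs} ds`, solves
`λ f(k+1) - k f(k) = 1{k=0} - e^{-λ}` (integrate `d/ds (s^(k+1) e^{-λs})`), and
`0 ≤ f ≤ f 1 = (1 - e^{-λ})/λ ≤ min 1 λ⁻¹`, so `|f(n+j) - f n| ≤ j · min 1 λ⁻¹`.
Evaluating the equation at `S = ∑ X_α` and taking expectations gives
`P(S = 0) - e^{-λ} = ∑_α E[p_α f(S+1) - X_α f(S)]`. With `W_α = ∑_{β ∉ N_α} X_β`, independence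
kills `E[(p_α - X_α) f(W_α+1)]`; subtracting it leaves increments of `f` of length
`∑_{β ∈ N_α} X_β` (weighted by `p_α`) and, on `X_α = 1`, `∑_{β ∈ N_α, β ≠ α} X_β`,
whose expectations are the summands of `b₁` and `b₂`.
-/

open MeasureTheory ProbabilityTheory

namespace ChenStein

open Real

noncomputable def steinSol (lam : ℝ) : ℕ → ℝ
  | 0 => 0
  | k + 1 => ∫ s in (0 : ℝ)..1, s ^ k * exp (-(lam * s))

variable {lam : ℝ}

lemma lam_mul_steinSol_one (lam : ℝ) : lam * steinSol lam 1 = 1 - exp (-lam) := by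
  have hderiv : ∀ s ∈ Set.uIcc (0 : ℝ) 1,
      HasDerivAt (fun s => exp (-(lam * s))) (-lam * exp (-(lam * s))) s := fun s _ =>
    (hasDerivAt_const_mul lam).fun_neg.exp.congr_deriv (mul_comm _ _)
  have hint := intervalIntegral.integral_eq_sub_of_hasDerivAt hderiv
    ((by fun_prop : Continuous _).intervalIntegrable _ _)
  simp only [intervalIntegral.integral_const_mul, mul_one, mul_zero, neg_zero, exp_zero] at hint
  simp only [steinSol, pow_zero, one_mul]
  linarith

lemma lam_mul_steinSol_sub (lam : ℝ) (k : ℕ) :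
    lam * steinSol lam (k + 2) - (k + 1) * steinSol lam (k + 1) = -exp (-lam) := by
  have hderiv : ∀ s ∈ Set.uIcc (0 : ℝ) 1, HasDerivAt (fun s => s ^ (k + 1) * exp (-(lam * s)))
      ((k + 1) * (s ^ k * exp (-(lam * s))) - lam * (s ^ (k + 1) * exp (-(lam * s)))) s :=
    fun s _ => ((hasDerivAt_pow (k + 1) s).fun_mul
      (hasDerivAt_const_mul lam).fun_neg.exp).congr_deriv (by push_cast; ring)
  have hint := intervalIntegral.integral_eq_sub_of_hasDerivAt hderiv
    ((by fun_prop : Continuous _).intervalIntegrable _ _)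
  rw [intervalIntegral.integral_sub ((by fun_prop : Continuous _).intervalIntegrable _ _)
    ((by fun_prop : Continuous _).intervalIntegrable _ _),
    intervalIntegral.integral_const_mul, intervalIntegral.integral_const_mul] at hint
  simp only [one_pow, one_mul, mul_one, zero_pow (Nat.succ_ne_zero k), mul_zero, neg_zero,
    exp_zero, sub_zero] at hint
  simp only [steinSol]
  linarith

lemma steinSol_stein_eq (lam : ℝ) (k : ℕ) :
    lam * steinSol lam (k + 1) - k * steinSol lam k = (if k = 0 then 1 else 0) - exp (-lam) := by
  rcases k with _ | k
  · simp [lam_mul_steinSol_one]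
  · simpa using lam_mul_steinSol_sub lam k

lemma steinSol_nonneg (lam : ℝ) (k : ℕ) : 0 ≤ steinSol lam k := by
  rcases k with _ | k
  · exact le_rfl
  · exact intervalIntegral.integral_nonneg zero_le_one fun s hs => by
      have := hs.1; positivity

lemma steinSol_le_steinSol_one (lam : ℝ) (k : ℕ) : steinSol lam k ≤ steinSol lam 1 := by
  rcases k with _ | k
  · exact steinSol_nonneg lam 1
  · refine intervalIntegral.integral_mono_on zero_le_one
      ((by fun_prop : Continuous _).intervalIntegrable _ _)
      ((by fun_prop : Continuous _).intervalIntegrable _ _) fun s hs => ?_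
    rw [pow_zero, one_mul]
    exact mul_le_of_le_one_left (exp_pos _).le (pow_le_one₀ hs.1 hs.2)

lemma steinSol_one_le (hl : 0 < lam) : steinSol lam 1 ≤ min 1 lam⁻¹ := by
  refine le_min ?_ ?_
  · calc steinSol lam 1 ≤ ∫ _ in (0 : ℝ)..1, (1 : ℝ) :=
          intervalIntegral.integral_mono_on zero_le_one
            ((by fun_prop : Continuous _).intervalIntegrable _ _)
            ((by fun_prop : Continuous _).intervalIntegrable _ _) fun s hs => by
              simp only [pow_zero, one_mul, exp_le_one_iff, neg_nonpos]
              exact mul_nonneg hl.le hs.1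
      _ = 1 := by simp
  · rw [← mul_one lam⁻¹, le_inv_mul_iff₀ hl, lam_mul_steinSol_one]
    linarith [exp_pos (-lam)]

lemma abs_steinSol_add_sub_le (hl : 0 < lam) (n j : ℕ) :
    |steinSol lam (n + j) - steinSol lam n| ≤ j * min 1 lam⁻¹ := by
  rcases j.eq_zero_or_pos with rfl | hj
  · simp
  have hbound := fun k => (steinSol_le_steinSol_one lam k).trans (steinSol_one_le hl)
  calc |steinSol lam (n + j) - steinSol lam n| ≤ min 1 lam⁻¹ :=
        abs_sub_le_of_nonneg_of_le (steinSol_nonneg _ _) (hbound _) (steinSol_nonneg _ _) (hbound _)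
    _ ≤ j * min 1 lam⁻¹ :=
        le_mul_of_one_le_left (by positivity) (by exact_mod_cast hj)

lemma sum_steinSol_eq_ite_sub_exp {I : Type*} (s : Finset I) (p : I → ℝ) (y : I → ℕ) :
    ∑ α ∈ s, (p α * steinSol (∑ β ∈ s, p β) (∑ β ∈ s, y β + 1)
        - y α * steinSol (∑ β ∈ s, p β) (∑ β ∈ s, y β)) =
      (if ∑ β ∈ s, y β = 0 then 1 else 0) - exp (-∑ β ∈ s, p β) := by
  rw [Finset.sum_sub_distrib, ← Finset.sum_mul, ← Finset.sum_mul, ← Nat.cast_sum,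
    steinSol_stein_eq]

lemma abs_stein_term_sub_le (hl : 0 < lam) {p : ℝ} (hp : 0 ≤ p) {y : ℕ} (hy : y ≤ 1) (z w : ℕ) :
    |p * steinSol lam (y + z + w + 1) - y * steinSol lam (y + z + w)
        - (p - y) * steinSol lam (w + 1)| ≤ min 1 lam⁻¹ * (p * (y + z) + y * z) := by
  have hp_term : |p * (steinSol lam (w + 1 + (y + z)) - steinSol lam (w + 1))|
      ≤ p * ((y + z : ℕ) * min 1 lam⁻¹) := by
    rw [abs_mul, abs_of_nonneg hp]
    exact mul_le_mul_of_nonneg_left (abs_steinSol_add_sub_le hl _ _) hp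
  rcases Nat.le_one_iff_eq_zero_or_eq_one.mp hy with rfl | rfl
  · calc _ = |p * (steinSol lam (w + 1 + (0 + z)) - steinSol lam (w + 1))| := by ring_nf
      _ ≤ p * ((0 + z : ℕ) * min 1 lam⁻¹) := hp_term
      _ = _ := by push_cast; ring
  · calc _ = |p * (steinSol lam (w + 1 + (1 + z)) - steinSol lam (w + 1))
              - (steinSol lam (w + 1 + z) - steinSol lam (w + 1))| := by ring_nf
      _ ≤ p * ((1 + z : ℕ) * min 1 lam⁻¹) + z * min 1 lam⁻¹ :=
          (abs_sub _ _).trans (add_le_add hp_term (abs_steinSol_add_sub_le hl _ _))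
      _ = _ := by push_cast; ring

section Bernoulli

variable {Ω I : Type*} [MeasurableSpace Ω] {μ : Measure Ω} [Fintype I] {Y : I → Ω → ℕ}

lemma integrable_comp_of_le_one [IsFiniteMeasure μ] (hY : ∀ α, Measurable (Y α))
    (hY1 : ∀ α ω, Y α ω ≤ 1) (G : (I → ℕ) → ℝ) : Integrable (fun ω => G fun α => Y α ω) μ := by
  classical
  refine .of_bound (Measurable.of_discrete.comp (measurable_pi_lambda _ hY)).aestronglyMeasurable
    (∑ v ∈ Fintype.piFinset fun _ => Finset.range 2, |G v|) (ae_of_all _ fun ω => ?_)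
  refine Finset.single_le_sum (f := fun v => |G v|) (fun _ _ => abs_nonneg _) ?_
  simpa [Fintype.mem_piFinset, Nat.lt_succ_iff] using fun α => hY1 α ω

variable [IsProbabilityMeasure μ] [DecidableEq I]

lemma abs_integral_stein_term_le (hY : ∀ α, Measurable (Y α)) (hY1 : ∀ α ω, Y α ω ≤ 1)
    {p : I → ℝ} (hp : ∀ α, ∫ ω, (Y α ω : ℝ) ∂μ = p α) {N : Finset I} {α : I} (hα : α ∈ N)
    (hindep : IndepFun (Y α) (fun ω => ∑ β ∈ Nᶜ, Y β ω) μ) (hl : 0 < lam) :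
    |∫ ω, (p α * steinSol lam (∑ β, Y β ω + 1) - Y α ω * steinSol lam (∑ β, Y β ω)) ∂μ| ≤
      min 1 lam⁻¹ * (∑ β ∈ N, p α * p β + ∑ β ∈ N.erase α, ∫ ω, (Y α ω : ℝ) * Y β ω ∂μ) := by
  have hint := integrable_comp_of_le_one (μ := μ) hY hY1
  have hpα : 0 ≤ p α := hp α ▸ integral_nonneg fun ω => Nat.cast_nonneg _
  set W := fun ω => ∑ β ∈ Nᶜ, Y β ω
  set Z := fun ω => ∑ β ∈ N.erase α, Y β ω
  have hsum : ∀ ω, ∑ β, Y β ω = Y α ω + Z ω + W ω := fun ω => by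
    rw [← Finset.sum_add_sum_compl N, ← Finset.add_sum_erase N _ hα]
  have hterm := hint fun v => p α * steinSol lam (∑ β, v β + 1) - v α * steinSol lam (∑ β, v β)
  have hmid := hint fun v => (p α - v α) * steinSol lam (∑ β ∈ Nᶜ, v β + 1)
  have hmean : ∫ ω, (p α - Y α ω) * steinSol lam (W ω + 1) ∂μ = 0 := by
    have hind := hindep.comp (φ := fun n : ℕ => p α - n) (ψ := fun n => steinSol lam (n + 1))
      .of_discrete .of_discrete
    calc _ = (∫ ω, (p α - Y α ω : ℝ) ∂μ) * ∫ ω, steinSol lam (W ω + 1) ∂μ :=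
          hind.integral_mul_eq_mul_integral (hint fun v => p α - v α).aestronglyMeasurable
            (hint fun v => steinSol lam (∑ β ∈ Nᶜ, v β + 1)).aestronglyMeasurable
      _ = 0 := by
          rw [integral_sub (integrable_const _) (hint fun v => v α), hp, integral_const]
          simp
  have hpoint : ∀ ω, |(p α * steinSol lam (∑ β, Y β ω + 1) - Y α ω * steinSol lam (∑ β, Y β ω))
      - (p α - Y α ω) * steinSol lam (W ω + 1)| ≤
      min 1 lam⁻¹ * (∑ β ∈ N, p α * Y β ω + ∑ β ∈ N.erase α, (Y α ω : ℝ) * Y β ω) := fun ω => by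
    rw [← Finset.mul_sum, ← Finset.mul_sum, ← Finset.add_sum_erase N _ hα, hsum, ← Nat.cast_sum]
    exact abs_stein_term_sub_le hl hpα (hY1 α ω) (Z ω) (W ω)
  calc _ = |∫ ω, ((p α * steinSol lam (∑ β, Y β ω + 1) - Y α ω * steinSol lam (∑ β, Y β ω))
        - (p α - Y α ω) * steinSol lam (W ω + 1)) ∂μ| := by
        rw [integral_sub hterm hmid, hmean, sub_zero]
    _ ≤ ∫ ω, min 1 lam⁻¹ * (∑ β ∈ N, p α * Y β ω + ∑ β ∈ N.erase α, (Y α ω : ℝ) * Y β ω) ∂μ :=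
        abs_integral_le_integral_abs.trans <| integral_mono (hterm.sub hmid).abs
          (hint fun v => min 1 lam⁻¹ * (∑ β ∈ N, p α * v β + ∑ β ∈ N.erase α, (v α : ℝ) * v β))
          hpoint
    _ = _ := by
        rw [integral_const_mul, integral_add (hint fun v => ∑ β ∈ N, p α * v β)
          (hint fun v => ∑ β ∈ N.erase α, (v α : ℝ) * v β),
          integral_finsetSum _ fun β _ => hint fun v => p α * v β,
          integral_finsetSum _ fun β _ => hint fun v => (v α : ℝ) * v β]
        simp only [integral_const_mul, hp]

theorem abs_measureReal_sum_eq_zero_sub_exp_le (hY : ∀ α, Measurable (Y α))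
    (hY1 : ∀ α ω, Y α ω ≤ 1) {p : I → ℝ} (hp : ∀ α, ∫ ω, (Y α ω : ℝ) ∂μ = p α)
    {N : I → Finset I} (hN : ∀ α, α ∈ N α)
    (hindep : ∀ α, IndepFun (Y α) (fun ω => ∑ β ∈ (N α)ᶜ, Y β ω) μ)
    (hlam : ∑ α, p α = lam) (hl : 0 < lam) :
    |μ.real {ω | ∑ α, Y α ω = 0} - exp (-lam)| ≤
      min 1 lam⁻¹ * (∑ α, ∑ β ∈ N α, p α * p β +
        ∑ α, ∑ β ∈ (N α).erase α, ∫ ω, (Y α ω : ℝ) * Y β ω ∂μ) := by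
  have hint := integrable_comp_of_le_one (μ := μ) hY hY1
  have hstein : μ.real {ω | ∑ α, Y α ω = 0} - exp (-lam) =
      ∑ α, ∫ ω, (p α * steinSol lam (∑ β, Y β ω + 1) - Y α ω * steinSol lam (∑ β, Y β ω)) ∂μ := by
    rw [← integral_finsetSum _ fun α _ =>
      hint fun v => p α * steinSol lam (∑ β, v β + 1) - v α * steinSol lam (∑ β, v β)]
    subst hlam
    simp_rw [sum_steinSol_eq_ite_sub_exp]
    rw [integral_sub (hint fun v => if ∑ β, v β = 0 then 1 else 0) (integrable_const _),
      integral_const, probReal_univ, one_smul, ← integral_indicator_one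
        (measurableSet_eq_fun (Finset.measurable_sum _ fun α _ => hY α) measurable_const)]
    simp [Set.indicator_apply]
  rw [hstein, ← Finset.sum_add_distrib, Finset.mul_sum]
  exact (Finset.abs_sum_le_sum_abs _ _).trans <| Finset.sum_le_sum fun α _ =>
    abs_integral_stein_term_le hY hY1 hp (hN α) (hindep α) hl

end Bernoulli

lemma indepFun_comp_sum_compl {Ω I β : Type*} [MeasurableSpace Ω] {μ : Measure Ω} [Fintype I]
    [DecidableEq I] [MeasurableSpace β] {X : I → Ω → β} {g : β → ℕ} (hg : Measurable g)
    {α : I} {N : Finset I}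
    (hindep : Indep (MeasurableSpace.comap (X α) inferInstance)
      (⨆ (γ : I) (_ : γ ∉ N), MeasurableSpace.comap (X γ) inferInstance) μ) :
    IndepFun (fun ω => g (X α ω)) (fun ω => ∑ γ ∈ Nᶜ, g (X γ ω)) μ := by
  rw [IndepFun_iff_Indep]
  refine indep_of_indep_of_le_left (indep_of_indep_of_le_right hindep ?_)
    (hg.comp (comap_measurable (X α))).comap_le
  refine (Finset.measurable_sum _ fun γ hγ => hg.comp ?_).comap_le
  exact (comap_measurable (X γ)).mono (le_iSup₂ (f := fun γ (_ : γ ∉ N) =>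
    MeasurableSpace.comap (X γ) inferInstance) γ (Finset.mem_compl.mp hγ)) le_rfl

end ChenStein

theorem stmt_16 {Ω : Type*} [MeasurableSpace Ω] (μ : Measure Ω) [IsProbabilityMeasure μ]
    {I : Type*} [Fintype I] [DecidableEq I]
    (X : I → Ω → ℝ) (hmeas : ∀ α, Measurable (X α))
    (h01 : ∀ α ω, X α ω = 0 ∨ X α ω = 1)
    (N : I → Finset I) (hN : ∀ α, α ∈ N α)
    (p : I → ℝ) (hp : ∀ α, p α = (μ {ω | X α ω = 1}).toReal)
    (lam : ℝ) (hlam : lam = ∑ α, p α) (hlampos : 0 < lam)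
    (hindep : ∀ α, Indep (MeasurableSpace.comap (X α) inferInstance)
      (⨆ (β : I) (_ : β ∉ N α), MeasurableSpace.comap (X β) inferInstance) μ) :
    |(μ {ω | ∑ α, X α ω = 0}).toReal - Real.exp (-lam)| ≤
      min 1 lam⁻¹ *
        ((∑ α, ∑ β ∈ N α, p α * p β) +
          ∑ α, ∑ β ∈ (N α).erase α, ∫ ω, X α ω * X β ω ∂μ) := by
  have hfloor : ∀ α ω, (⌊X α ω⌋₊ : ℝ) = X α ω := fun α ω => by
    rcases h01 α ω with h | h <;> simp [h]
  have hfloor_le : ∀ α ω, ⌊X α ω⌋₊ ≤ 1 := fun α ω => by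
    rcases h01 α ω with h | h <;> simp [h]
  have hmean : ∀ α, ∫ ω, (⌊X α ω⌋₊ : ℝ) ∂μ = p α := fun α => by
    rw [hp, ← measureReal_def,
      ← integral_indicator_one (measurableSet_eq_fun (hmeas α) measurable_const)]
    refine integral_congr_ae (ae_of_all _ fun ω => ?_)
    rcases h01 α ω with h | h <;> simp [h]
  have hzero : {ω | ∑ α, ⌊X α ω⌋₊ = 0} = {ω | ∑ α, X α ω = 0} := by
    ext ω
    rw [Set.mem_ofPred_eq, Set.mem_ofPred_eq, ← Nat.cast_eq_zero (R := ℝ), Nat.cast_sum]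
    simp only [hfloor]
  simpa only [hzero, hfloor, measureReal_def] using
    ChenStein.abs_measureReal_sum_eq_zero_sub_exp_le (Y := fun α ω => ⌊X α ω⌋₊)
      (fun α => Nat.measurable_floor.comp (hmeas α)) hfloor_le hmean hN
      (fun α => ChenStein.indepFun_comp_sum_compl Nat.measurable_floor (hindep α)) hlam.symm hlampos
end
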